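/- arXiv:1311.3134 — 3 statements merged into one kernel-verified Lean document; each statement's English description precedes it below -/
import Mathlib

section
/- Let H be a real Hilbert space (complete real inner product space). Let φ₁, φ₂ : H → EReal be proper, convex, lower semicontinuous functions whose effective domains intersect: there exists x ∈ H with both φ₁(x) and φ₂(x) finite. Then the set-sum of the ranges of the subdifferentials satisfies R(∂φ₁) + R(∂φ₂) ⊆ closure(R(∂(φ₁ + φ₂))), where R(∂φ) = {y ∈ H : ∃ x, y ∈ ∂φ(x)} and ∂(φ₁+φ₂) is the subdifferential of the pointwise sum. -/
open scoped Pointwise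

/-- The subdifferential of `φ : H → EReal` at `x`. -/
def SubDiff {H : Type*} [NormedAddCommGroup H] [InnerProductSpace ℝ H]
    (φ : H → EReal) (x : H) : Set H :=
  {y | φ x ≠ ⊤ ∧ φ x ≠ ⊥ ∧ ∀ z : H, φ x + ((inner ℝ y (z - x) : ℝ) : EReal) ≤ φ z}

/-- The range of the subdifferential of `φ`. -/
def SubDiffRange {H : Type*} [NormedAddCommGroup H] [InnerProductSpace ℝ H]
    (φ : H → EReal) : Set H :=
  {y | ∃ x : H, y ∈ SubDiff φ x}

/-- `φ` is proper: never `-∞` and finite somewhere. -/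
def ProperFun {H : Type*} (φ : H → EReal) : Prop :=
  (∀ x : H, φ x ≠ ⊥) ∧ ∃ x : H, φ x ≠ ⊤

/-- Convexity for an `EReal`-valued function. -/
def ConvexFunEReal {H : Type*} [AddCommGroup H] [Module ℝ H] (φ : H → EReal) : Prop :=
  ∀ x y : H, ∀ a b : ℝ, 0 ≤ a → 0 ≤ b → a + b = 1 →
    φ (a • x + b • y) ≤ (a : EReal) * φ x + (b : EReal) * φ y

/-! Write `y = y₁ + y₂` with `yᵢ ∈ ∂φᵢ(xᵢ)`. The subgradient inequalities give
`φ₁ + φ₂ ≥ r + ⟪y, ·⟫`, so `ψ := φ₁ + φ₂ - ⟪y, ·⟫` is bounded below, and `∂ψ = ∂(φ₁ + φ₂) - y`.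
For `c > 0` the proximal point `z` minimising `ψ + c‖· - x₀‖²` exists (minimising sequences are
Cauchy by the parallelogram law), and `2c (x₀ - z) ∈ ∂ψ(z)`. Comparing with `x₀` gives
`c‖z - x₀‖² ≤ ψ(x₀) - inf ψ`, so this subgradient has norm at most `2 √(c (ψ(x₀) - inf ψ))`,
which tends to `0` with `c`. Hence `0 ∈ closure R(∂ψ)`, that is, `y ∈ closure R(∂(φ₁ + φ₂))`. -/

open Filter Topology
open scoped RealInnerProductSpace

theorem EReal.le_of_forall_ge_coe {x y : EReal} (h : ∀ r : ℝ, y ≤ r → x ≤ r) : x ≤ y := by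
  by_contra! hyx
  obtain ⟨r, hyr, hrx⟩ := EReal.lt_iff_exists_real_btwn.1 hyx
  exact (h r hyr.le).not_gt hrx

theorem EReal.le_coe_sub_of_add_le {x : EReal} {p q : ℝ} (h : x + q ≤ p) :
    x ≤ ((p - q : ℝ) : EReal) := by
  rw [EReal.coe_sub]
  exact (EReal.le_sub_iff_add_le (.inl (EReal.coe_ne_bot q)) (.inl (EReal.coe_ne_top q))).2 h

theorem LowerSemicontinuous.add_ereal {α : Type*} [TopologicalSpace α] {f g : α → EReal}
    (hf : LowerSemicontinuous f) (hg : LowerSemicontinuous g)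
    (hf' : ∀ x, f x ≠ ⊥) (hg' : ∀ x, g x ≠ ⊥) :
    LowerSemicontinuous fun x => f x + g x :=
  hf.add' hg fun x => EReal.continuousAt_add (.inr (hg' x)) (.inl (hf' x))

section Convexity

variable {E : Type*} [AddCommGroup E] [Module ℝ E]

theorem ConvexFunEReal.add {f g : E → EReal} (hf : ConvexFunEReal f) (hg : ConvexFunEReal g) :
    ConvexFunEReal fun x => f x + g x := by
  intro x y a b ha hb hab
  calc f (a • x + b • y) + g (a • x + b • y)
      ≤ (a * f x + b * f y) + (a * g x + b * g y) :=
        add_le_add (hf x y a b ha hb hab) (hg x y a b ha hb hab)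
    _ = a * (f x + g x) + b * (f y + g y) := by
        rw [EReal.left_distrib_of_nonneg_of_ne_top (EReal.coe_nonneg.2 ha) (EReal.coe_ne_top a),
          EReal.left_distrib_of_nonneg_of_ne_top (EReal.coe_nonneg.2 hb) (EReal.coe_ne_top b),
          add_add_add_comm]

theorem ConvexOn.convexFunEReal_coe {f : E → ℝ} (hf : ConvexOn ℝ Set.univ f) :
    ConvexFunEReal fun x => (f x : EReal) := by
  intro x y a b ha hb hab
  dsimp only
  exact_mod_cast hf.2 (Set.mem_univ x) (Set.mem_univ y) ha hb hab

theorem ConvexFunEReal.le_coe {f : E → EReal} (hf : ConvexFunEReal f) {x y : E} {p q : ℝ}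
    (hx : f x ≤ p) (hy : f y ≤ q) {a b : ℝ} (ha : 0 ≤ a) (hb : 0 ≤ b) (hab : a + b = 1) :
    f (a • x + b • y) ≤ ((a * p + b * q : ℝ) : EReal) :=
  calc f (a • x + b • y) ≤ a * f x + b * f y := hf x y a b ha hb hab
    _ ≤ a * p + b * q := add_le_add (mul_le_mul_of_nonneg_left hx (EReal.coe_nonneg.2 ha))
        (mul_le_mul_of_nonneg_left hy (EReal.coe_nonneg.2 hb))
    _ = ((a * p + b * q : ℝ) : EReal) := by push_cast; rfl

end Convexity

theorem LowerSemicontinuous.exists_forall_le_of_midpoint_ineq {X : Type*} [PseudoMetricSpace X]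
    [CompleteSpace X] {g : X → EReal} (hg : LowerSemicontinuous g) {L : ℝ}
    (hL : ∀ x, (L : EReal) ≤ g x) {x₀ : X} (hx₀ : g x₀ ≠ ⊤) {κ : ℝ} (hκ : 0 < κ)
    (hmid : ∀ u v (r s : ℝ), g u ≤ r → g v ≤ s →
      ∃ w, g w ≤ (((r + s) / 2 - κ * dist u v ^ 2 : ℝ) : EReal)) :
    ∃ z, ∀ w, g z ≤ g w := by
  obtain ⟨μ, hμ⟩ : ∃ μ : ℝ, (μ : EReal) = ⨅ x, g x :=
    ⟨_, EReal.coe_toReal (ne_top_of_le_ne_top hx₀ (iInf_le g x₀))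
      (ne_bot_of_le_ne_bot (EReal.coe_ne_bot L) (le_iInf hL))⟩
  have hμ_le : ∀ w, (μ : EReal) ≤ g w := fun w => hμ ▸ iInf_le g w
  -- the tolerance `κ δ²` at step `n` forces the terms beyond `n` to be `δ`-close
  set δ : ℕ → ℝ := fun n => 1 / (n + 1)
  have hδ_pos : ∀ n, 0 < δ n := fun n => by positivity
  have hδ_sq : ∀ {N n}, N ≤ n → δ n ^ 2 ≤ δ N ^ 2 := fun {N n} hNn =>
    pow_le_pow_left₀ (hδ_pos n).le (by dsimp only [δ]; gcongr) 2
  have hseq : ∀ n, ∃ z, g z < ((μ + κ * δ n ^ 2 : ℝ) : EReal) := fun n => by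
    rw [← iInf_lt_iff, ← hμ, EReal.coe_lt_coe_iff]
    have := hδ_pos n
    exact lt_add_of_pos_right μ (by positivity)
  choose z hz using hseq
  have hdist : ∀ n k N, N ≤ n → N ≤ k → dist (z n) (z k) ≤ δ N := by
    intro n k N hn hk
    obtain ⟨w, hw⟩ := hmid (z n) (z k) _ _ (hz n).le (hz k).le
    have hμw := EReal.coe_le_coe_iff.1 ((hμ_le w).trans hw)
    have := hδ_sq hn
    have := hδ_sq hk
    refine (pow_le_pow_iff_left₀ dist_nonneg (hδ_pos N).le two_ne_zero).1 ?_
    nlinarith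
  obtain ⟨z', hz'⟩ := cauchySeq_tendsto_of_complete
    (cauchySeq_of_le_tendsto_0 δ hdist tendsto_one_div_add_atTop_nhds_zero_nat)
  have hz'_le : ∀ N, g z' ≤ ((μ + κ * δ N ^ 2 : ℝ) : EReal) := fun N =>
    (hg.isClosed_preimage _).mem_of_tendsto hz' <| eventually_atTop.2
      ⟨N, fun n hn => (hz n).le.trans <| EReal.coe_le_coe_iff.2 <| by
        have := hδ_sq hn; gcongr⟩
  have hlim : Tendsto (fun N => ((μ + κ * δ N ^ 2 : ℝ) : EReal)) atTop (𝓝 μ) := by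
    refine continuous_coe_real_ereal.continuousAt.tendsto.comp ?_
    dsimp only [δ]
    simpa using ((tendsto_one_div_add_atTop_nhds_zero_nat.pow 2).const_mul κ).const_add μ
  exact ⟨z', fun w => (ge_of_tendsto' hlim hz'_le).trans (hμ_le w)⟩

section InnerProductSpace

variable {H : Type*} [NormedAddCommGroup H] [InnerProductSpace ℝ H]

theorem norm_half_smul_add_half_smul_sub_sq (u v a : H) :
    ‖(1 / 2 : ℝ) • u + (1 / 2 : ℝ) • v - a‖ ^ 2 =
      (‖u - a‖ ^ 2 + ‖v - a‖ ^ 2) / 2 - ‖u - v‖ ^ 2 / 4 := by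
  have h := parallelogram_law_with_norm ℝ (u - a) (v - a)
  rw [show u - a + (v - a) = (2 : ℝ) • ((1 / 2 : ℝ) • u + (1 / 2 : ℝ) • v - a) by module,
    show u - a - (v - a) = u - v by abel, norm_smul, mul_pow] at h
  norm_num at h
  linarith

theorem ConvexFunEReal.exists_forall_add_sq_norm_le [CompleteSpace H] {f : H → EReal}
    (hf : ConvexFunEReal f) (hlsc : LowerSemicontinuous f) {L : ℝ} (hL : ∀ x, (L : EReal) ≤ f x)
    {x₀ : H} (hx₀ : f x₀ ≠ ⊤) {c : ℝ} (hc : 0 < c) (a : H) :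
    ∃ z, ∀ w, f z + ((c * ‖z - a‖ ^ 2 : ℝ) : EReal) ≤ f w + ((c * ‖w - a‖ ^ 2 : ℝ) : EReal) := by
  have hf_bot : ∀ x, f x ≠ ⊥ := fun x => ne_bot_of_le_ne_bot (EReal.coe_ne_bot L) (hL x)
  refine LowerSemicontinuous.exists_forall_le_of_midpoint_ineq
    (hlsc.add_ereal (continuous_coe_real_ereal.comp (by fun_prop)).lowerSemicontinuous hf_bot
      fun _ => EReal.coe_ne_bot _)
    (L := L) (fun x => (hL x).trans (le_add_of_nonneg_right (by positivity)))
    (EReal.add_ne_top hx₀ (EReal.coe_ne_top _)) (by positivity : 0 < c / 4) ?_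
  intro u v r s hu hv
  refine ⟨(1 / 2 : ℝ) • u + (1 / 2 : ℝ) • v, ?_⟩
  calc _ ≤ (((1 / 2) * (r - c * ‖u - a‖ ^ 2) + (1 / 2) * (s - c * ‖v - a‖ ^ 2) : ℝ) : EReal) +
        ((c * ‖(1 / 2 : ℝ) • u + (1 / 2 : ℝ) • v - a‖ ^ 2 : ℝ) : EReal) :=
        add_le_add_left (hf.le_coe (EReal.le_coe_sub_of_add_le hu) (EReal.le_coe_sub_of_add_le hv)
          (by norm_num) (by norm_num) (by norm_num)) _
    _ = (((r + s) / 2 - c / 4 * dist u v ^ 2 : ℝ) : EReal) := by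
        rw [← EReal.coe_add, norm_half_smul_add_half_smul_sub_sq, dist_eq_norm]
        ring_nf

theorem ConvexFunEReal.smul_sub_mem_subDiff {f : H → EReal} (hf : ConvexFunEReal f) {c : ℝ}
    {a z : H} (hz : f z ≠ ⊤) (hz' : f z ≠ ⊥)
    (hmin : ∀ w, f z + ((c * ‖z - a‖ ^ 2 : ℝ) : EReal) ≤ f w + ((c * ‖w - a‖ ^ 2 : ℝ) : EReal)) :
    (2 * c) • (a - z) ∈ SubDiff f z := by
  refine ⟨hz, hz', fun v => EReal.le_of_forall_ge_coe fun r hr => ?_⟩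
  lift f z to ℝ using ⟨hz, hz'⟩ with p hp
  set d := v - z
  -- compare `z` with the points `(1 - t) • z + t • v` and let `t → 0⁺`
  have hseg : ∀ t ∈ Set.Ioc (0 : ℝ) 1, p + ⟪(2 * c) • (a - z), d⟫ - r ≤ t * (c * ‖d‖ ^ 2) := by
    rintro t ⟨ht₀, ht₁⟩
    have hconv := hf.le_coe hp.ge hr (sub_nonneg.2 ht₁) ht₀.le (sub_add_cancel 1 t)
    have hnorm : ‖(1 - t) • z + t • v - a‖ ^ 2 =
        ‖z - a‖ ^ 2 + 2 * t * ⟪z - a, d⟫ + t ^ 2 * ‖d‖ ^ 2 := by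
      rw [show (1 - t) • z + t • v - a = (z - a) + t • d by module, norm_add_sq_real,
        real_inner_smul_right, norm_smul, Real.norm_eq_abs, mul_pow, sq_abs]
      ring
    have h := (hmin _).trans (add_le_add_left hconv _)
    rw [← EReal.coe_add, ← EReal.coe_add, EReal.coe_le_coe_iff, hnorm] at h
    rw [real_inner_smul_left, show a - z = -(z - a) by abel, inner_neg_left]
    nlinarith
  have hlim : Tendsto (fun t : ℝ => t * (c * ‖d‖ ^ 2)) (𝓝[>] 0) (𝓝 0) := by
    simpa using ((tendsto_id (x := 𝓝 (0 : ℝ))).mono_left nhdsWithin_le_nhds).mul_const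
      (c * ‖d‖ ^ 2)
  have := ge_of_tendsto hlim (eventually_of_mem (Ioc_mem_nhdsGT one_pos) hseg)
  rw [← EReal.coe_add, EReal.coe_le_coe_iff]
  linarith

theorem zero_mem_closure_subDiffRange [CompleteSpace H] {f : H → EReal} (hf : ConvexFunEReal f)
    (hlsc : LowerSemicontinuous f) {L : ℝ} (hL : ∀ x, (L : EReal) ≤ f x) {x₀ : H}
    (hx₀ : f x₀ ≠ ⊤) : (0 : H) ∈ closure (SubDiffRange f) := by
  have hf_bot : ∀ x, f x ≠ ⊥ := fun x => ne_bot_of_le_ne_bot (EReal.coe_ne_bot L) (hL x)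
  rw [Metric.mem_closure_iff]
  intro ε hε
  set D := (f x₀).toReal - L
  have hD : 0 ≤ D := sub_nonneg.2 <| EReal.coe_le_coe_iff.1 <|
    (EReal.coe_toReal hx₀ (hf_bot x₀)).symm ▸ hL x₀
  set c := ε ^ 2 / (4 * (D + 1))
  have hc : 0 < c := by positivity
  obtain ⟨z, hz⟩ := hf.exists_forall_add_sq_norm_le hlsc hL hx₀ hc x₀
  have hzx₀ : f z + ((c * ‖z - x₀‖ ^ 2 : ℝ) : EReal) ≤ ((f x₀).toReal : EReal) := by
    simpa [EReal.coe_toReal hx₀ (hf_bot x₀)] using hz x₀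
  have hz_top : f z ≠ ⊤ :=
    ne_top_of_le_ne_top (EReal.coe_ne_top _) (EReal.le_coe_sub_of_add_le hzx₀)
  refine ⟨(2 * c) • (x₀ - z), ⟨z, hf.smul_sub_mem_subDiff hz_top (hf_bot z) hz⟩, ?_⟩
  have hLz := hL z
  rw [← EReal.coe_toReal hz_top (hf_bot z)] at hzx₀ hLz
  rw [← EReal.coe_add, EReal.coe_le_coe_iff] at hzx₀
  rw [EReal.coe_le_coe_iff] at hLz
  have hcz : c * ‖z - x₀‖ ^ 2 ≤ D := by linarith
  rw [dist_zero_left, norm_smul, Real.norm_of_nonneg (by positivity), norm_sub_rev]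
  refine (pow_lt_pow_iff_left₀ (by positivity) hε.le two_ne_zero).1 ?_
  calc (2 * c * ‖z - x₀‖) ^ 2 = 4 * c * (c * ‖z - x₀‖ ^ 2) := by ring
    _ ≤ 4 * c * D := by gcongr
    _ < ε ^ 2 := by
      rw [show 4 * c * D = ε ^ 2 * (D / (D + 1)) by
        have : D + 1 ≠ 0 := by linarith
        simp only [c]; field_simp]
      exact mul_lt_of_lt_one_right (by positivity) ((div_lt_one (by positivity)).2 (by linarith))

theorem exists_coe_add_inner_le_of_mem_subDiff {φ : H → EReal} {x y : H}
    (h : y ∈ SubDiff φ x) : ∃ r : ℝ, ∀ z, ((r + ⟪y, z⟫ : ℝ) : EReal) ≤ φ z := by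
  obtain ⟨hx, hx', hsub⟩ := h
  lift φ x to ℝ using ⟨hx, hx'⟩ with p
  refine ⟨p - ⟪y, x⟫, fun z => (hsub z).trans_eq' ?_⟩
  rw [← EReal.coe_add, inner_sub_right]
  ring_nf

theorem add_mem_subDiff_of_mem_subDiff_add_neg_inner {φ : H → EReal} {y v z : H}
    (h : v ∈ SubDiff (fun x => φ x + ((-⟪y, x⟫ : ℝ) : EReal)) z) : y + v ∈ SubDiff φ z := by
  obtain ⟨hz, hz', hsub⟩ := h
  beta_reduce at hz hz' hsub
  have hφz : φ z ≠ ⊤ := fun h => hz (by rw [h, EReal.top_add_coe])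
  have hφz' : φ z ≠ ⊥ := fun h => hz' (by rw [h, EReal.bot_add])
  refine ⟨hφz, hφz', fun w => EReal.le_of_forall_ge_coe fun r hr => ?_⟩
  lift φ z to ℝ using ⟨hφz, hφz'⟩ with p
  have := (hsub w).trans (add_le_add_left hr _)
  rw [← EReal.coe_add, ← EReal.coe_add, ← EReal.coe_add, EReal.coe_le_coe_iff] at this
  rw [← EReal.coe_add, EReal.coe_le_coe_iff]
  simp only [inner_add_left, inner_sub_right] at this ⊢
  linarith

theorem mem_closure_subDiffRange_of_coe_add_inner_le [CompleteSpace H] {φ : H → EReal}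
    (hφ : ConvexFunEReal φ) (hlsc : LowerSemicontinuous φ) {x₀ : H} (hx₀ : φ x₀ ≠ ⊤) {y : H}
    {r : ℝ} (hr : ∀ z, ((r + ⟪y, z⟫ : ℝ) : EReal) ≤ φ z) : y ∈ closure (SubDiffRange φ) := by
  set ψ := fun x => φ x + ((-⟪y, x⟫ : ℝ) : EReal)
  have hψ : ConvexFunEReal ψ :=
    hφ.add ((innerₛₗ ℝ y).concaveOn convex_univ).neg.convexFunEReal_coe
  have hψ_lsc : LowerSemicontinuous ψ :=
    hlsc.add_ereal (continuous_coe_real_ereal.comp (by fun_prop)).lowerSemicontinuous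
      (fun x => ne_bot_of_le_ne_bot (EReal.coe_ne_bot _) (hr x)) fun _ => EReal.coe_ne_bot _
  have hψ_ge : ∀ x, (r : EReal) ≤ ψ x := fun x => by
    calc (r : EReal) = ((r + ⟪y, x⟫ : ℝ) : EReal) + ((-⟪y, x⟫ : ℝ) : EReal) := by
          rw [← EReal.coe_add, add_neg_cancel_right]
      _ ≤ ψ x := add_le_add_left (hr x) _
  have h₀ := zero_mem_closure_subDiffRange hψ hψ_lsc hψ_ge
    (EReal.add_ne_top hx₀ (EReal.coe_ne_top _) : ψ x₀ ≠ ⊤)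
  simpa using map_mem_closure (t := SubDiffRange φ) (continuous_const_add y) h₀
    fun _ ⟨z, hv⟩ => ⟨z, add_mem_subDiff_of_mem_subDiff_add_neg_inner hv⟩

end InnerProductSpace

theorem brezis_haraux_closure_inclusion
    {H : Type*} [NormedAddCommGroup H] [InnerProductSpace ℝ H] [CompleteSpace H]
    (φ₁ φ₂ : H → EReal)
    (h₁p : ProperFun φ₁) (h₂p : ProperFun φ₂)
    (h₁c : ConvexFunEReal φ₁) (h₂c : ConvexFunEReal φ₂)
    (h₁l : LowerSemicontinuous φ₁) (h₂l : LowerSemicontinuous φ₂)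
    (hdom : ∃ x : H, φ₁ x ≠ ⊤ ∧ φ₁ x ≠ ⊥ ∧ φ₂ x ≠ ⊤ ∧ φ₂ x ≠ ⊥) :
    SubDiffRange φ₁ + SubDiffRange φ₂ ⊆
      closure (SubDiffRange (fun x => φ₁ x + φ₂ x)) := by
  rintro _ ⟨y₁, ⟨x₁, hy₁⟩, y₂, ⟨x₂, hy₂⟩, rfl⟩
  obtain ⟨r₁, hr₁⟩ := exists_coe_add_inner_le_of_mem_subDiff hy₁
  obtain ⟨r₂, hr₂⟩ := exists_coe_add_inner_le_of_mem_subDiff hy₂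
  obtain ⟨x₀, hx₁, -, hx₂, -⟩ := hdom
  refine mem_closure_subDiffRange_of_coe_add_inner_le (h₁c.add h₂c)
    (h₁l.add_ereal h₂l h₁p.1 h₂p.1) (EReal.add_ne_top hx₁ hx₂) (r := r₁ + r₂) fun z => ?_
  calc (((r₁ + r₂) + ⟪y₁ + y₂, z⟫ : ℝ) : EReal)
      = ((r₁ + ⟪y₁, z⟫ : ℝ) : EReal) + ((r₂ + ⟪y₂, z⟫ : ℝ) : EReal) := by
        rw [← EReal.coe_add, inner_add_left]; ring_nf
    _ ≤ φ₁ z + φ₂ z := add_le_add (hr₁ z) (hr₂ z)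
end

section
/- Let α : ℝ → ℝ be continuous, monotone nondecreasing with α(0) = 0, let L(t) = ∫₀ᵗ α(s) ds and Λ(t) = max(L(t), L(−t)). Then: (i) L(t) ≤ t·α(t) for all t ∈ ℝ; and (ii) if there exist t₀ > 0 and C > 0 such that Λ(2t) ≤ C·Λ(t) for all t ≥ t₀ (the Δ₂-condition near infinity), then there exist t₁ > 0 and k ∈ (0, 1] such that k·t·α(t) ≤ Λ(t) for all t ∈ ℝ with |t| ≥ t₁. -/
/-!
Since `α` is nondecreasing, `∫ₐᵇ α` lies between `(b - a) α(a)` and `(b - a) α(b)`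
for all `a, b` (in either order). The upper bound on `[0, t]` is (i). The lower bound on
`[0, t]` and on `[t, 2t]`, together with `α(0) = 0`, gives `0 ≤ L(t)` and
`t α(t) ≤ L(2t) ≤ Λ(2t)`; as `Λ` is even, the Δ₂-condition at `|t|` turns this into
`t α(t) ≤ max(C, 1) Λ(t)`, so `k = max(C, 1)⁻¹` works.
-/

open MeasureTheory

namespace Monotone

variable {f : ℝ → ℝ}

theorem mul_le_intervalIntegral (hf : Monotone f) (a b : ℝ) :
    (b - a) * f a ≤ ∫ x in a..b, f x := by
  rcases le_total a b with hab | hba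
  · simpa using intervalIntegral.integral_mono_on (μ := volume) hab
      intervalIntegrable_const hf.intervalIntegrable fun x hx => hf hx.1
  · have h := intervalIntegral.integral_mono_on (μ := volume) hba
      hf.intervalIntegrable intervalIntegrable_const fun x hx => hf hx.2
    rw [intervalIntegral.integral_symm]
    simp only [intervalIntegral.integral_const, smul_eq_mul] at h
    linarith

theorem intervalIntegral_le_mul (hf : Monotone f) (a b : ℝ) :
    ∫ x in a..b, f x ≤ (b - a) * f b := by
  rcases le_total a b with hab | hba
  · simpa using intervalIntegral.integral_mono_on (μ := volume) hab
      hf.intervalIntegrable intervalIntegrable_const fun x hx => hf hx.2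
  · have h := intervalIntegral.integral_mono_on (μ := volume) hba
      intervalIntegrable_const hf.intervalIntegrable fun x hx => hf hx.1
    rw [intervalIntegral.integral_symm]
    simp only [intervalIntegral.integral_const, smul_eq_mul] at h
    linarith

theorem intervalIntegral_zero_nonneg (hf : Monotone f) (h0 : f 0 = 0) (t : ℝ) :
    0 ≤ ∫ x in (0 : ℝ)..t, f x := by
  simpa [h0] using hf.mul_le_intervalIntegral 0 t

theorem mul_le_intervalIntegral_zero_two_mul (hf : Monotone f) (h0 : f 0 = 0) (t : ℝ) :
    t * f t ≤ ∫ x in (0 : ℝ)..2 * t, f x := by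
  rw [← intervalIntegral.integral_add_adjacent_intervals (b := t) hf.intervalIntegrable
    hf.intervalIntegrable]
  have h := hf.mul_le_intervalIntegral t (2 * t)
  have := hf.intervalIntegral_zero_nonneg h0 t
  linarith

end Monotone

theorem delta2_comparison_general
    (α : ℝ → ℝ) (hmono : Monotone α) (h0 : α 0 = 0)
    (L Λ : ℝ → ℝ)
    (hL : ∀ t : ℝ, L t = ∫ s in (0:ℝ)..t, α s)
    (hΛ : ∀ t : ℝ, Λ t = max (L t) (L (-t))) :
    -- (i)
    (∀ t : ℝ, L t ≤ t * α t) ∧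
    -- (ii)
    ((∃ t₀ > (0:ℝ), ∃ C > (0:ℝ), ∀ t ≥ t₀, Λ (2 * t) ≤ C * Λ t) →
      ∃ t₁ > (0:ℝ), ∃ k : ℝ, 0 < k ∧ k ≤ 1 ∧
        ∀ t : ℝ, t₁ ≤ |t| → k * (t * α t) ≤ Λ t) := by
  refine ⟨fun t => by simpa [hL] using hmono.intervalIntegral_le_mul 0 t, ?_⟩
  rintro ⟨t₀, ht₀, C, -, hΔ⟩
  have hΛ_abs (t : ℝ) : Λ |t| = Λ t := by
    rcases abs_choice t with h | h <;> rw [h]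
    rw [hΛ, hΛ, neg_neg, max_comm]
  have hM : (1 : ℝ) ≤ max C 1 := le_max_right C 1
  refine ⟨t₀, ht₀, (max C 1)⁻¹, by positivity, inv_le_one_of_one_le₀ hM,
    fun t ht => ?_⟩
  have hΛ_nonneg : 0 ≤ Λ t := by
    rw [hΛ, hL]
    exact le_max_of_le_left (hmono.intervalIntegral_zero_nonneg h0 t)
  have hΛ_two_mul : t * α t ≤ Λ (2 * |t|) := by
    rw [← abs_two, ← abs_mul, hΛ_abs, hΛ, hL]
    exact le_max_of_le_left (hmono.mul_le_intervalIntegral_zero_two_mul h0 t)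
  rw [inv_mul_le_iff₀ (by positivity)]
  calc t * α t ≤ C * Λ t := (hΛ_two_mul.trans (hΔ |t| ht)).trans_eq (by rw [hΛ_abs])
    _ ≤ max C 1 * Λ t := by gcongr; exact le_max_left C 1

theorem delta2_comparison
    (α : ℝ → ℝ) (hcont : Continuous α) (hmono : Monotone α) (h0 : α 0 = 0)
    (L Λ : ℝ → ℝ)
    (hL : ∀ t : ℝ, L t = ∫ s in (0:ℝ)..t, α s)
    (hΛ : ∀ t : ℝ, Λ t = max (L t) (L (-t))) :
    -- (i)
    (∀ t : ℝ, L t ≤ t * α t) ∧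
    -- (ii)
    ((∃ t₀ > (0:ℝ), ∃ C > (0:ℝ), ∀ t ≥ t₀, Λ (2 * t) ≤ C * Λ t) →
      ∃ t₁ > (0:ℝ), ∃ k : ℝ, 0 < k ∧ k ≤ 1 ∧
        ∀ t : ℝ, t₁ ≤ |t| → k * (t * α t) ≤ Λ t) :=
  delta2_comparison_general α hmono h0 L Λ hL hΛ
end

section
/- Let q ∈ ℝ with 0 < q < 2 + tan(1/2), set c = 2 + tan(1/2) − q, and define z : ℝ × ℝ → ℝ by z(x, y) = cos(x − 1/2)·cos(y − 1/2). Then: c > 0; Δz(x, y) + 2·z(x, y) = 0 for all (x, y) (where Δz = ∂²z/∂x² + ∂²z/∂y²); z(x, y) > 0 for all (x, y) ∈ [0, 1] × [0, 1]; and z satisfies the four Wentzell boundary conditions on the unit square: for all x ∈ [0, 1], −2z(x,0) − ∂_y z(x,0) + c·z(x,0) − q·∂²_{yy} z(x,0) = 0 and −2z(x,1) + ∂_y z(x,1) + c·z(x,1) − q·∂²_{yy} z(x,1) = 0, and for all y ∈ [0, 1], −2z(1,y) + ∂_x z(1,y) + c·z(1,y) − q·∂²_{xx} z(1,y) = 0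 and −2z(0,y) − ∂_x z(0,y) + c·z(0,y) − q·∂²_{xx} z(0,y) = 0. -/
/-!
With φ = cos (· - 1/2) we have z x y = φ x * φ y and φ'' = -φ, so Δz = -2z. At the endpoints
φ satisfies the Robin conditions φ'(0) = tan (1/2) φ(0) and φ'(1) = -tan (1/2) φ(1); together
with φ'' = -φ each Wentzell condition becomes (c + q - 2 - tan (1/2)) z = 0, which is how c is
chosen.
-/

open Real

lemma deriv_cos_comp_sub_const (a : ℝ) :
    deriv (fun t => cos (t - a)) = fun t => -sin (t - a) :=
  funext fun t => by rw [deriv_comp_sub_const, Real.deriv_cos]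

lemma deriv_deriv_cos_comp_sub_const (a : ℝ) :
    deriv (deriv fun t => cos (t - a)) = fun t => -cos (t - a) :=
  funext fun t => by
    rw [deriv_cos_comp_sub_const, deriv.fun_neg, deriv_comp_sub_const, Real.deriv_sin]

lemma deriv_cos_comp_sub_const_at_sub {b : ℝ} (a : ℝ) (hb : cos b ≠ 0) :
    deriv (fun t => cos (t - a)) (a - b) = tan b * cos (a - b - a) := by
  simp [tan_mul_cos hb]

lemma deriv_cos_comp_sub_const_at_add {b : ℝ} (a : ℝ) (hb : cos b ≠ 0) :
    deriv (fun t => cos (t - a)) (a + b) = -(tan b * cos (a + b - a)) := by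
  simp [tan_mul_cos hb]

lemma cos_sub_half_pos {x : ℝ} (hx : x ∈ Set.Icc (0 : ℝ) 1) : 0 < cos (x - 1/2) := by
  apply cos_pos_of_mem_Ioo
  constructor <;> linarith [hx.1, hx.2, pi_gt_three]

theorem ground_state_2d_square_general
    (q : ℝ) (hq1 : q < 2 + tan (1/2))
    (c : ℝ) (hc : c = 2 + tan (1/2) - q)
    (z : ℝ → ℝ → ℝ) (hz : ∀ x y : ℝ, z x y = cos (x - 1/2) * cos (y - 1/2)) :
    -- the constant c is positive
    0 < c ∧
    -- Δz + 2z = 0 on the plane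
    (∀ x y : ℝ, deriv (deriv (fun t => z t y)) x + deriv (deriv (z x)) y
        + 2 * z x y = 0) ∧
    -- positivity on the closed unit square
    (∀ x ∈ Set.Icc (0:ℝ) 1, ∀ y ∈ Set.Icc (0:ℝ) 1, 0 < z x y) ∧
    -- boundary condition on Γ₁ = {(x,0)}
    (∀ x ∈ Set.Icc (0:ℝ) 1,
      -2 * z x 0 - deriv (z x) 0 + c * z x 0 - q * deriv (deriv (z x)) 0 = 0) ∧
    -- boundary condition on Γ₃ = {(x,1)}
    (∀ x ∈ Set.Icc (0:ℝ) 1,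
      -2 * z x 1 + deriv (z x) 1 + c * z x 1 - q * deriv (deriv (z x)) 1 = 0) ∧
    -- boundary condition on Γ₂ = {(1,y)}
    (∀ y ∈ Set.Icc (0:ℝ) 1,
      -2 * z 1 y + deriv (fun t => z t y) 1 + c * z 1 y
        - q * deriv (deriv (fun t => z t y)) 1 = 0) ∧
    -- boundary condition on Γ₄ = {(0,y)}
    (∀ y ∈ Set.Icc (0:ℝ) 1,
      -2 * z 0 y - deriv (fun t => z t y) 0 + c * z 0 y
        - q * deriv (deriv (fun t => z t y)) 0 = 0) := by
  have hz_y (x : ℝ) : z x = fun y => cos (x - 1/2) * cos (y - 1/2) := funext (hz x)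
  have hcos : cos (1/2 : ℝ) ≠ 0 :=
    (cos_pos_of_mem_Ioo ⟨by linarith [pi_gt_three], by linarith [pi_gt_three]⟩).ne'
  have h_robin_0 := deriv_cos_comp_sub_const_at_sub (1/2) hcos
  have h_robin_1 := deriv_cos_comp_sub_const_at_add (1/2) hcos
  rw [sub_self] at h_robin_0
  rw [add_halves] at h_robin_1
  refine ⟨by linarith, fun x y => ?_,
    fun x hx y hy => hz x y ▸ mul_pos (cos_sub_half_pos hx) (cos_sub_half_pos hy),
    fun x _ => ?_, fun x _ => ?_, fun y _ => ?_, fun y _ => ?_⟩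
  all_goals
    simp only [hz_y, deriv_const_mul_field', deriv_mul_const_field',
      deriv_deriv_cos_comp_sub_const, h_robin_0, h_robin_1, hc]
    ring

theorem ground_state_2d_square
    (q : ℝ) (hq0 : 0 < q) (hq1 : q < 2 + tan (1/2))
    (c : ℝ) (hc : c = 2 + tan (1/2) - q)
    (z : ℝ → ℝ → ℝ) (hz : ∀ x y : ℝ, z x y = cos (x - 1/2) * cos (y - 1/2)) :
    -- the constant c is positive
    0 < c ∧
    -- Δz + 2z = 0 on the plane
    (∀ x y : ℝ, deriv (deriv (fun t => z t y)) x + deriv (deriv (z x)) y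
        + 2 * z x y = 0) ∧
    -- positivity on the closed unit square
    (∀ x ∈ Set.Icc (0:ℝ) 1, ∀ y ∈ Set.Icc (0:ℝ) 1, 0 < z x y) ∧
    -- boundary condition on Γ₁ = {(x,0)}
    (∀ x ∈ Set.Icc (0:ℝ) 1,
      -2 * z x 0 - deriv (z x) 0 + c * z x 0 - q * deriv (deriv (z x)) 0 = 0) ∧
    -- boundary condition on Γ₃ = {(x,1)}
    (∀ x ∈ Set.Icc (0:ℝ) 1,
      -2 * z x 1 + deriv (z x) 1 + c * z x 1 - q * deriv (deriv (z x)) 1 = 0) ∧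
    -- boundary condition on Γ₂ = {(1,y)}
    (∀ y ∈ Set.Icc (0:ℝ) 1,
      -2 * z 1 y + deriv (fun t => z t y) 1 + c * z 1 y
        - q * deriv (deriv (fun t => z t y)) 1 = 0) ∧
    -- boundary condition on Γ₄ = {(0,y)}
    (∀ y ∈ Set.Icc (0:ℝ) 1,
      -2 * z 0 y - deriv (fun t => z t y) 0 + c * z 0 y
        - q * deriv (deriv (fun t => z t y)) 0 = 0) :=
  ground_state_2d_square_general q hq1 c hc z hz
end
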